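/- For every t ∈ ℝ with |t| ≤ 3/2, the value 3/2 − |t| belongs to {|s| : s ∈ Spec(t)} and is its minimum: every s ∈ Spec(t) satisfies |s| ≥ 3/2 − |t|, and this bound is attained (by s = 3/2 − t if t ≥ 0 and by s = 3/2 + t if t ≤ 0). In other words, the smallest magnetic Dirac eigenvalue of the round 3-sphere in absolute value is |λ₁^{tη}| = 3/2 − |t| for |t| ≤ 3/2, so that |λ₁^{tη}| + |t| = 3/2. -/

import Mathlib

/-- `f₀(k,p,t) = (1 + t + 2p − k)² + 4(k − p)(p + 1)`. -/
noncomputable def f0 (k p : ℤ) (t : ℝ) : ℝ :=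
  (1 + t + 2 * (p : ℝ) - (k : ℝ)) ^ 2 + 4 * ((k : ℝ) - (p : ℝ)) * ((p : ℝ) + 1)

/-- The spectrum of the magnetic Dirac operator `D^{tη}` on the round 3-sphere of
sectional curvature 1, where `η` is the Reeb one-form of the Hopf fibration. -/
noncomputable def Spec (t : ℝ) : Set ℝ :=
  {s | ∃ k : ℕ, s = 3 / 2 + (k : ℝ) + t} ∪
    {s | ∃ k : ℕ, s = 3 / 2 + (k : ℝ) - t} ∪
    {s | ∃ k p : ℕ, p < k ∧ s = 1 / 2 + Real.sqrt (f0 (k : ℤ) (p : ℤ) t)} ∪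
    {s | ∃ k p : ℕ, p < k ∧ s = 1 / 2 - Real.sqrt (f0 (k : ℤ) (p : ℤ) t)}

/-! The lower bound holds for every `t`: the two linear families are at least `3/2 - |t|`
already at `k = 0`, and the two square-root families stay at distance at least `3/2` from `0`
because `f₀ ≥ 4(k - p)(p + 1) ≥ 4`. The bound is attained by the `k = 0` member of the
linear family that decreases with `|t|`, which is nonnegative exactly when `|t| ≤ 3/2`. -/

lemma four_le_f0 {k p : ℕ} (h : p < k) (t : ℝ) : 4 ≤ f0 k p t := by
  have hkp : (1 : ℝ) ≤ k - p := by
    have : (p : ℝ) + 1 ≤ k := by exact_mod_cast h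
    linarith
  have hp : (1 : ℝ) ≤ p + 1 := by linarith [(Nat.cast_nonneg p : (0 : ℝ) ≤ p)]
  unfold f0
  push_cast
  nlinarith [sq_nonneg (1 + t + 2 * (p : ℝ) - k), mul_le_mul hkp hp zero_le_one (by linarith)]

lemma two_le_sqrt_f0 {k p : ℕ} (h : p < k) (t : ℝ) : 2 ≤ √(f0 k p t) :=
  Real.le_sqrt_of_sq_le (by linarith [four_le_f0 h t])

lemma three_halves_add_mem_Spec (t : ℝ) : 3 / 2 + t ∈ Spec t :=
  Or.inl (Or.inl (Or.inl ⟨0, by simp⟩))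

lemma three_halves_sub_mem_Spec (t : ℝ) : 3 / 2 - t ∈ Spec t :=
  Or.inl (Or.inl (Or.inr ⟨0, by simp⟩))

lemma three_halves_sub_abs_mem_Spec (t : ℝ) : 3 / 2 - |t| ∈ Spec t := by
  rcases le_total 0 t with ht | ht
  · simpa [abs_of_nonneg ht] using three_halves_sub_mem_Spec t
  · simpa [abs_of_nonpos ht] using three_halves_add_mem_Spec t

lemma three_halves_sub_abs_le_abs_of_mem_Spec {t s : ℝ} (hs : s ∈ Spec t) :
    3 / 2 - |t| ≤ |s| := by
  have hneg : -t ≤ |t| := neg_le_abs t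
  have hpos : t ≤ |t| := le_abs_self t
  rcases hs with ((⟨k, rfl⟩ | ⟨k, rfl⟩) | ⟨k, p, hpk, rfl⟩) | ⟨k, p, hpk, rfl⟩
  · exact le_trans (by linarith [(Nat.cast_nonneg k : (0 : ℝ) ≤ k)]) (le_abs_self _)
  · exact le_trans (by linarith [(Nat.cast_nonneg k : (0 : ℝ) ≤ k)]) (le_abs_self _)
  · exact le_trans (by linarith [two_le_sqrt_f0 hpk t, abs_nonneg t]) (le_abs_self _)
  · exact le_trans (by linarith [two_le_sqrt_f0 hpk t, abs_nonneg t]) (neg_le_abs _)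

/-- For `|t| ≤ 3/2`, the value `3/2 − |t|` is the minimum of `{|s| : s ∈ Spec t}`,
attained by `s = 3/2 − t` if `t ≥ 0` and by `s = 3/2 + t` if `t ≤ 0`. -/
theorem stmt11 (t : ℝ) (ht : |t| ≤ 3 / 2) :
    IsLeast {r : ℝ | ∃ s ∈ Spec t, |s| = r} (3 / 2 - |t|) ∧
    (0 ≤ t → (3 / 2 - t) ∈ Spec t) ∧ (t ≤ 0 → (3 / 2 + t) ∈ Spec t) := by
  refine ⟨⟨⟨3 / 2 - |t|, three_halves_sub_abs_mem_Spec t, abs_of_nonneg (by linarith)⟩, ?_⟩,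
    fun _ ↦ three_halves_sub_mem_Spec t, fun _ ↦ three_halves_add_mem_Spec t⟩
  rintro r ⟨s, hs, rfl⟩
  exact three_halves_sub_abs_le_abs_of_mem_Spec hs
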